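/- Generalized implicit log transform with parameter a: for a > 0, s > 1, and continuous compactly supported F on [0,∞), ∫₀^∞ e^(−s t) · (∫₀^∞ t^(a u) F(u) / Γ(a u + 1) du) dt = f(a · ln s) / s, where f(w) = ∫₀^∞ e^(−w u) F(u) du. -/

import Mathlib

/-!
For fixed `u > 0` the kernel `t ↦ t ^ (a u) / Γ(a u + 1)` has Laplace transform
`s ^ (-(a u + 1)) = exp (-(a log s) u) / s`. Since the kernel is nonnegative, the same computation
applied to `|F|` shows that the double integral converges absolutely, so Fubini lets us swap the
two integrals and integrate out `t` first.
-/

open MeasureTheory Real Set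

lemma integrableOn_exp_neg_mul_mul_rpow {s p : ℝ} (hs : 0 < s) (hp : -1 < p) :
    IntegrableOn (fun t => exp (-s * t) * t ^ p) (Ioi 0) := by
  simpa only [rpow_one, mul_comm] using integrableOn_rpow_mul_exp_neg_mul_rpow hp one_pos hs

lemma integral_exp_neg_mul_mul_rpow_div_Gamma {s p : ℝ} (hs : 0 < s) (hp : -1 < p) :
    ∫ t in Ioi 0, exp (-s * t) * (t ^ p / Gamma (p + 1)) = exp (-p * log s) / s := by
  have hp1 : 0 < p + 1 := by linarith
  have hΓ := integral_rpow_mul_exp_neg_mul_Ioi hp1 hs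
  simp only [add_sub_cancel_right] at hΓ
  calc ∫ t in Ioi 0, exp (-s * t) * (t ^ p / Gamma (p + 1))
      = (∫ t in Ioi 0, t ^ p * exp (-(s * t))) / Gamma (p + 1) := by
        rw [← integral_div]
        refine setIntegral_congr_fun measurableSet_Ioi fun t _ => ?_
        simp only [neg_mul]
        ring
    _ = exp (-p * log s) / s := by
        rw [hΓ, mul_div_cancel_right₀ _ (Gamma_pos_of_pos hp1).ne', one_div,
          inv_rpow hs.le, rpow_add hs, rpow_one, rpow_def_of_pos hs, mul_inv, ← exp_neg]
        ring_nf

lemma continuousOn_rpow_mul_div_Gamma {a : ℝ} (ha : 0 ≤ a) :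
    ContinuousOn (fun x : ℝ × ℝ => x.1 ^ (a * x.2) / Gamma (a * x.2 + 1))
      (Ioi 0 ×ˢ Ioi 0) := by
  intro x hx
  have hpos : 0 < a * x.2 + 1 := by nlinarith [hx.2.out]
  refine ContinuousAt.continuousWithinAt (ContinuousAt.div ?_ ?_ (Gamma_pos_of_pos hpos).ne')
  · exact continuousAt_fst.rpow (by fun_prop) (Or.inl hx.1.out.ne')
  · have hΓ : ContinuousAt Gamma (a * x.2 + 1) :=
      (differentiableAt_Gamma fun m => by
        linarith [(Nat.cast_nonneg m : (0:ℝ) ≤ m)]).continuousAt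
    exact hΓ.comp (f := fun x : ℝ × ℝ => a * x.2 + 1) (by fun_prop)

theorem integral_exp_neg_mul_mul_integral_rpow_mul_div_Gamma {F : ℝ → ℝ} {a s : ℝ}
    (ha : 0 ≤ a) (hs : 0 < s)
    (hF : IntegrableOn (fun u => exp (-(a * log s) * u) * F u) (Ioi 0)) :
    ∫ t in Ioi 0, exp (-s * t) * (∫ u in Ioi 0, t ^ (a * u) * F u / Gamma (a * u + 1))
      = (∫ u in Ioi 0, exp (-(a * log s) * u) * F u) / s := by
  set μ := volume.restrict (Ioi (0:ℝ))
  set g : ℝ → ℝ → ℝ := fun t u => exp (-s * t) * (t ^ (a * u) / Gamma (a * u + 1)) * F u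
  have hFm : AEStronglyMeasurable F μ := by
    refine ((continuous_exp.comp (continuous_const_mul (a * log s))).aestronglyMeasurable.mul
      hF.aestronglyMeasurable).congr (ae_of_all _ fun u => ?_)
    simp only [Pi.mul_apply, Function.comp_apply, ← mul_assoc, ← exp_add, neg_mul,
      add_neg_cancel, exp_zero, one_mul]
  have hgm : AEStronglyMeasurable (Function.uncurry g) (μ.prod μ) := by
    refine AEStronglyMeasurable.mul ?_ hFm.comp_snd
    rw [Measure.prod_restrict]
    refine ContinuousOn.aestronglyMeasurable ?_ (measurableSet_Ioi.prod measurableSet_Ioi)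
    exact ((continuous_exp.comp (by fun_prop)).continuousOn).mul
      (continuousOn_rpow_mul_div_Gamma ha)
  have hau : ∀ u ∈ Ioi (0:ℝ), -1 < a * u := fun u hu => by nlinarith [hu.out]
  have hinner : ∀ u ∈ Ioi (0:ℝ), ∫ t, g t u ∂μ = exp (-(a * log s) * u) * F u / s := by
    intro u hu
    rw [integral_mul_const, integral_exp_neg_mul_mul_rpow_div_Gamma hs (hau u hu)]
    ring_nf
  have hnorm :
      ∀ u ∈ Ioi (0:ℝ), ∫ t, ‖g t u‖ ∂μ = ‖exp (-(a * log s) * u) * F u‖ / s := by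
    intro u hu
    have hΓ : 0 < Gamma (a * u + 1) := Gamma_pos_of_pos (by linarith [hau u hu])
    calc ∫ t, ‖g t u‖ ∂μ
        = ∫ t, exp (-s * t) * (t ^ (a * u) / Gamma (a * u + 1)) * ‖F u‖ ∂μ := by
          refine setIntegral_congr_fun measurableSet_Ioi fun t ht => ?_
          simp only [g, norm_mul, norm_div, norm_of_nonneg (exp_pos _).le,
            norm_of_nonneg (rpow_nonneg ht.out.le _), norm_of_nonneg hΓ.le]
      _ = ‖exp (-(a * log s) * u) * F u‖ / s := by
          rw [integral_mul_const, integral_exp_neg_mul_mul_rpow_div_Gamma hs (hau u hu), norm_mul,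
            norm_of_nonneg (exp_pos _).le]
          ring_nf
  have hg : Integrable (Function.uncurry g) (μ.prod μ) := by
    rw [integrable_prod_iff' hgm]
    constructor
    · filter_upwards [self_mem_ae_restrict measurableSet_Ioi] with u hu
      simpa only [Function.uncurry_apply_pair, g, mul_div_assoc] using
        ((integrableOn_exp_neg_mul_mul_rpow hs (hau u hu)).div_const _).mul_const (F u)
    · refine (hF.norm.div_const s).congr ?_
      filter_upwards [self_mem_ae_restrict measurableSet_Ioi] with u hu
      exact (hnorm u hu).symm
  calc ∫ t, exp (-s * t) * (∫ u, t ^ (a * u) * F u / Gamma (a * u + 1) ∂μ) ∂μ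
      = ∫ t, ∫ u, g t u ∂μ ∂μ := by
        refine integral_congr_ae (ae_of_all _ fun t => ?_)
        simp only [g, ← integral_const_mul]
        congr 1 with u
        ring
    _ = ∫ u, ∫ t, g t u ∂μ ∂μ := integral_integral_swap hg
    _ = ∫ u, exp (-(a * log s) * u) * F u / s ∂μ :=
        setIntegral_congr_fun measurableSet_Ioi hinner
    _ = (∫ u, exp (-(a * log s) * u) * F u ∂μ) / s := integral_div _ _

theorem stmt_6_general (F : ℝ → ℝ) (hF : Continuous F) (hsupp : HasCompactSupport F)
    (a s : ℝ) (ha : 0 < a) (hs : 1 < s) :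
    ∫ t in Set.Ioi (0:ℝ), Real.exp (-s * t) *
        (∫ u in Set.Ioi (0:ℝ), t ^ (a * u) * F u / Real.Gamma (a * u + 1))
      = (∫ u in Set.Ioi (0:ℝ), Real.exp (-(a * Real.log s) * u) * F u) / s :=
  integral_exp_neg_mul_mul_integral_rpow_mul_div_Gamma ha.le (by linarith)
    (Continuous.integrable_of_hasCompactSupport (by fun_prop) hsupp.mul_left).integrableOn

theorem stmt_6 (F : ℝ → ℝ) (hF : Continuous F) (hsupp : HasCompactSupport F)
    (hpos : Function.support F ⊆ Set.Ici 0) (a s : ℝ) (ha : 0 < a) (hs : 1 < s) :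
    ∫ t in Set.Ioi (0:ℝ), Real.exp (-s * t) *
        (∫ u in Set.Ioi (0:ℝ), t ^ (a * u) * F u / Real.Gamma (a * u + 1))
      = (∫ u in Set.Ioi (0:ℝ), Real.exp (-(a * Real.log s) * u) * F u) / s :=
  stmt_6_general F hF hsupp a s ha hs
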